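/- Let U be a finite nonempty universe, I a finite index set, S : I → Finset U, and c : I → ℝ with c i ≥ 0 for all i. Define u(K) = B − Σ_{i∈K} c i if ⋃_{i∈K} S i = U and u(K) = 0 otherwise. Suppose there exists a cover K₀ ⊆ I (i.e., ⋃_{i∈K₀} S i = U) with Σ_{i∈K₀} c i < B. Then every K* ⊆ I that maximizes u over all subsets of I is itself a cover of U, and K* achieves the minimum total cost Σ_{i∈K} c i among all covers K ⊆ I of U. -/

import Mathlib

section BudgetUtility

variable {α : Type*} {P : α → Prop} [DecidablePred P] {f u : α → ℝ} {B : ℝ} {x : α}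

theorem feasible_of_forall_le_of_lt_budget (hu : ∀ y, u y = if P y then B - f y else 0)
    {x₀ : α} (hx₀ : P x₀) (hB : f x₀ < B) (hmax : ∀ y, u y ≤ u x) : P x := by
  by_contra hx
  have := hmax x₀
  rw [hu, if_pos hx₀, hu, if_neg hx] at this
  linarith

theorem cost_le_of_forall_le (hu : ∀ y, u y = if P y then B - f y else 0)
    (hx : P x) (hmax : ∀ y, u y ≤ u x) {y : α} (hy : P y) : f x ≤ f y := by
  have := hmax y
  rw [hu, if_pos hy, hu, if_pos hx] at this
  linarith

end BudgetUtility

theorem sata_reduction_optimal_is_min_cover_general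
    {U I : Type*} [Fintype U] [DecidableEq U]
    (S : I → Finset U) (c : I → ℝ) (B : ℝ)
    (u : Finset I → ℝ)
    (hu : ∀ K : Finset I,
      u K = if K.biUnion S = (Finset.univ : Finset U) then B - ∑ i ∈ K, c i else 0)
    (K₀ : Finset I) (hK₀ : K₀.biUnion S = (Finset.univ : Finset U))
    (hK₀cost : ∑ i ∈ K₀, c i < B) :
    ∀ Kstar : Finset I, (∀ K : Finset I, u K ≤ u Kstar) →
      Kstar.biUnion S = (Finset.univ : Finset U) ∧
      ∀ K : Finset I, K.biUnion S = (Finset.univ : Finset U) →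
        ∑ i ∈ Kstar, c i ≤ ∑ i ∈ K, c i := by
  intro Kstar hmax
  have hcover := feasible_of_forall_le_of_lt_budget hu hK₀ hK₀cost hmax
  exact ⟨hcover, fun _ hK => cost_le_of_forall_le hu hcover hmax hK⟩

/-- If some cover has total cost strictly below the budget, every utility-maximizing set
of workers is a cover and has minimum total cost among all covers. -/
theorem sata_reduction_optimal_is_min_cover
    {U I : Type*} [Fintype U] [DecidableEq U] [Nonempty U] [Fintype I] [DecidableEq I]
    (S : I → Finset U) (c : I → ℝ) (hc : ∀ i, 0 ≤ c i) (B : ℝ)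
    (u : Finset I → ℝ)
    (hu : ∀ K : Finset I,
      u K = if K.biUnion S = (Finset.univ : Finset U) then B - ∑ i ∈ K, c i else 0)
    (K₀ : Finset I) (hK₀ : K₀.biUnion S = (Finset.univ : Finset U))
    (hK₀cost : ∑ i ∈ K₀, c i < B) :
    ∀ Kstar : Finset I, (∀ K : Finset I, u K ≤ u Kstar) →
      Kstar.biUnion S = (Finset.univ : Finset U) ∧
      ∀ K : Finset I, K.biUnion S = (Finset.univ : Finset U) →
        ∑ i ∈ Kstar, c i ≤ ∑ i ∈ K, c i :=
  sata_reduction_optimal_is_min_cover_general S c B u hu K₀ hK₀ hK₀cost
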